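/- Let R > 0 and r₁, r₂ ∈ (0, R] with r₁ + r₂ ≥ R, and define θ(r₁, r₂) = arccos((cosh(r₁)·cosh(r₂) − cosh(R))/(sinh(r₁)·sinh(r₂))). Then θ(r₁, r₂) ≥ 2·sqrt(e^{R − r₁ − r₂} + e^{−R − r₁ − r₂} − e^{−2r₁} − e^{−2r₂}). -/

import Mathlib

/-!
Write `x` for the argument of `arccos` and `D = cosh R - cosh (r₁ - r₂) ≥ 0`. The addition formulas
give `1 - x = D / (sinh r₁ sinh r₂)`, while the radicand is `2 e^{-(r₁+r₂)} D`. As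
`4 sinh r₁ sinh r₂ ≤ e^{r₁+r₂}`, four times the radicand is at most `2 (1 - x)`, and
`2 (1 - cos θ) ≤ θ²` at `θ = arccos x` concludes.
-/

open Real

lemma Real.sqrt_two_mul_one_sub_le_arccos {x : ℝ} (h₁ : -1 ≤ x) (h₂ : x ≤ 1) :
    √(2 * (1 - x)) ≤ arccos x := by
  have h := one_sub_sq_div_two_le_cos (x := arccos x)
  rw [cos_arccos h₁ h₂] at h
  exact sqrt_le_iff.2 ⟨arccos_nonneg x, by linarith⟩

lemma Real.one_sub_div_sinh_mul_sinh {a b : ℝ} (c : ℝ) (h : sinh a * sinh b ≠ 0) :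
    1 - (cosh a * cosh b - c) / (sinh a * sinh b) = (c - cosh (a - b)) / (sinh a * sinh b) := by
  rw [cosh_sub, eq_div_iff h, sub_mul, div_mul_cancel₀ _ h]; ring

lemma Real.one_add_div_sinh_mul_sinh {a b : ℝ} (c : ℝ) (h : sinh a * sinh b ≠ 0) :
    1 + (cosh a * cosh b - c) / (sinh a * sinh b) = (cosh (a + b) - c) / (sinh a * sinh b) := by
  rw [cosh_add, eq_div_iff h, add_mul, div_mul_cancel₀ _ h]; ring

lemma Real.four_mul_sinh_mul_sinh_le_exp_add {a b : ℝ} (h : 0 ≤ a + b) :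
    4 * (sinh a * sinh b) ≤ exp (a + b) := by
  linarith [cosh_add a b, cosh_sub a b, cosh_eq (a + b), one_le_cosh (a - b),
    exp_le_one_iff.2 (neg_nonpos.2 h)]

lemma Real.four_mul_exp_neg_add_le_inv_sinh_mul_sinh {a b : ℝ} (ha : 0 < a) (hb : 0 < b) :
    4 * exp (-(a + b)) ≤ (sinh a * sinh b)⁻¹ := by
  have hs := mul_pos (sinh_pos_iff.2 ha) (sinh_pos_iff.2 hb)
  rw [exp_neg, ← div_eq_mul_inv, div_le_iff₀ (exp_pos _), inv_mul_eq_div, le_div_iff₀ hs]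
  exact four_mul_sinh_mul_sinh_le_exp_add (by positivity)

lemma Real.two_mul_exp_neg_add_mul_cosh_sub_cosh (a b c : ℝ) :
    2 * exp (-(a + b)) * (cosh c - cosh (a - b)) =
      exp (c - a - b) + exp (-c - a - b) - exp (-(2 * a)) - exp (-(2 * b)) := by
  rw [cosh_eq, cosh_eq]
  ring_nf
  simp only [← exp_add]
  ring_nf

theorem theta_lower_bound_general (R r₁ r₂ : ℝ)
    (hr₁ : r₁ ∈ Set.Ioc 0 R) (hr₂ : r₂ ∈ Set.Ioc 0 R) (hsum : R ≤ r₁ + r₂) :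
    2 * Real.sqrt (Real.exp (R - r₁ - r₂) + Real.exp (-R - r₁ - r₂)
        - Real.exp (-(2 * r₁)) - Real.exp (-(2 * r₂))) ≤
      Real.arccos ((Real.cosh r₁ * Real.cosh r₂ - Real.cosh R) /
        (Real.sinh r₁ * Real.sinh r₂)) := by
  obtain ⟨hr₁0, hr₁R⟩ := hr₁
  obtain ⟨hr₂0, hr₂R⟩ := hr₂
  have hs : 0 < sinh r₁ * sinh r₂ := mul_pos (sinh_pos_iff.2 hr₁0) (sinh_pos_iff.2 hr₂0)
  have hD : 0 ≤ cosh R - cosh (r₁ - r₂) :=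
    sub_nonneg.2 (cosh_le_cosh.2 (abs_le_abs (by linarith) (by linarith)))
  have hE : 0 ≤ cosh (r₁ + r₂) - cosh R :=
    sub_nonneg.2 (cosh_le_cosh.2 (abs_le_abs (by linarith) (by linarith)))
  set x := (cosh r₁ * cosh r₂ - cosh R) / (sinh r₁ * sinh r₂)
  have h1x : 1 - x = (cosh R - cosh (r₁ - r₂)) / (sinh r₁ * sinh r₂) :=
    one_sub_div_sinh_mul_sinh _ hs.ne'
  have hx₁ : -1 ≤ x := by
    linarith [one_add_div_sinh_mul_sinh (cosh R) hs.ne' ▸ div_nonneg hE hs.le]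
  have hx₂ : x ≤ 1 := by linarith [h1x ▸ div_nonneg hD hs.le]
  rw [← two_mul_exp_neg_add_mul_cosh_sub_cosh]
  calc 2 * √(2 * exp (-(r₁ + r₂)) * (cosh R - cosh (r₁ - r₂)))
      = √(2 * (4 * exp (-(r₁ + r₂))) * (cosh R - cosh (r₁ - r₂))) := by
        rw [show 2 * (4 * exp (-(r₁ + r₂))) * (cosh R - cosh (r₁ - r₂))
            = 2 ^ 2 * (2 * exp (-(r₁ + r₂)) * (cosh R - cosh (r₁ - r₂))) by ring,
          sqrt_mul (sq_nonneg 2), sqrt_sq zero_le_two]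
    _ ≤ √(2 * (sinh r₁ * sinh r₂)⁻¹ * (cosh R - cosh (r₁ - r₂))) := by
        gcongr; exact four_mul_exp_neg_add_le_inv_sinh_mul_sinh hr₁0 hr₂0
    _ = √(2 * (1 - x)) := by rw [h1x, div_eq_inv_mul, mul_assoc]
    _ ≤ arccos x := sqrt_two_mul_one_sub_le_arccos hx₁ hx₂

theorem theta_lower_bound (R r₁ r₂ : ℝ) (hR : 0 < R)
    (hr₁ : r₁ ∈ Set.Ioc 0 R) (hr₂ : r₂ ∈ Set.Ioc 0 R) (hsum : R ≤ r₁ + r₂) :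
    2 * Real.sqrt (Real.exp (R - r₁ - r₂) + Real.exp (-R - r₁ - r₂)
        - Real.exp (-(2 * r₁)) - Real.exp (-(2 * r₂))) ≤
      Real.arccos ((Real.cosh r₁ * Real.cosh r₂ - Real.cosh R) /
        (Real.sinh r₁ * Real.sinh r₂)) :=
  theta_lower_bound_general R r₁ r₂ hr₁ hr₂ hsum
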